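/- Let n be a nonempty finite type, v : EuclideanSpace ℂ n a unit vector, and ρ = vvᴴ the rank-one orthogonal projection matrix ρ i j = v i · conj(v j). Suppose ρ = ∑_{k ∈ K} λ_k σ_k for a finite family with λ_k > 0, ∑_k λ_k = 1, and each σ_k : Matrix n n ℂ positive semidefinite with trace 1. Then σ_k = ρ for every k ∈ K. -/

import Mathlib

/-!
Each weighted component satisfies `0 ≤ λₖ σₖ ≤ ρ` in the Loewner order, so `σₖ` vanishes on
`ker ρ = v⊥`. Since `ρ = v vᴴ` is idempotent this gives `σₖ = σₖ ρ`, and as `σₖ` is Hermitian also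
`σₖ = ρ σₖ ρ = (vᴴ σₖ v) • ρ`; the trace condition forces the scalar to be `1`.
-/

open scoped BigOperators ComplexOrder MatrixOrder
open Matrix

namespace Matrix

theorem mulVec_eq_zero_of_le_of_mulVec_eq_zero {𝕜 n : Type*} [RCLike 𝕜] [Fintype n]
    {A B : Matrix n n 𝕜} (hA : 0 ≤ A) (hAB : A ≤ B) {x : n → 𝕜} (hB : B *ᵥ x = 0) :
    A *ᵥ x = 0 := by
  have hquad : 0 ≤ star x ⬝ᵥ (B - A) *ᵥ x := (le_iff.mp hAB).dotProduct_mulVec_nonneg x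
  rw [sub_mulVec, dotProduct_sub, hB, dotProduct_zero, zero_sub, neg_nonneg] at hquad
  exact (hA.posSemidef.dotProduct_mulVec_zero_iff x).mp
    (le_antisymm hquad (hA.posSemidef.dotProduct_mulVec_nonneg x))

theorem mul_eq_self_of_isIdempotentElem {R n : Type*} [Ring R] [Fintype n] {A P : Matrix n n R}
    (hP : IsIdempotentElem P) (hker : ∀ x, P *ᵥ x = 0 → A *ᵥ x = 0) : A * P = A := by
  refine ext_iff_mulVec.mpr fun x => ?_
  have hx : P *ᵥ (x - P *ᵥ x) = 0 := by rw [mulVec_sub, mulVec_mulVec, hP.eq, sub_self]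
  rw [← mulVec_mulVec, eq_comm, ← sub_eq_zero, ← mulVec_sub]
  exact hker _ hx

theorem isIdempotentElem_vecMulVec_star {R n : Type*} [Semiring R] [StarRing R] [Fintype n]
    {u : n → R} (hu : star u ⬝ᵥ u = 1) : IsIdempotentElem (vecMulVec u (star u)) := by
  rw [IsIdempotentElem, vecMulVec_mul_vecMulVec, hu, one_smul]

theorem IsHermitian.eq_smul_vecMulVec_of_mul_eq_self {R n : Type*} [CommSemiring R] [StarRing R]
    [Fintype n] {A : Matrix n n R} (hA : A.IsHermitian) {u : n → R}
    (hAu : A * vecMulVec u (star u) = A) :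
    A = (star u ⬝ᵥ A *ᵥ u) • vecMulVec u (star u) := by
  have hPA : vecMulVec u (star u) * A = A := by
    simpa [conjTranspose_mul, conjTranspose_vecMulVec, hA.eq] using congrArg (·ᴴ) hAu
  calc A = vecMulVec u (star u) * A * vecMulVec u (star u) := by rw [hPA, hAu]
    _ = (star u ⬝ᵥ A *ᵥ u) • vecMulVec u (star u) := by
      rw [vecMulVec_mul, vecMulVec_mul_vecMulVec, ← dotProduct_mulVec]
      exact vecMulVec_smul _ _ _

end Matrix

theorem pure_state_extremal
    {n : Type*} [Fintype n]
    (v : EuclideanSpace ℂ n) (hv : ‖v‖ = 1)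
    (ρ : Matrix n n ℂ) (hρ : ρ = Matrix.of fun i j => v i * starRingEnd ℂ (v j))
    (K : Type*) [Fintype K] (lam : K → ℝ) (σ : K → Matrix n n ℂ)
    (hlam : ∀ k, 0 < lam k)
    (hσpsd : ∀ k, (σ k).PosSemidef) (hσtr : ∀ k, (σ k).trace = 1)
    (hdecomp : ρ = ∑ k, (lam k : ℂ) • σ k) :
    ∀ k, σ k = ρ := by
  intro k
  set u : n → ℂ := v.ofLp
  have hρu : ρ = vecMulVec u (star u) := hρ
  have hu : star u ⬝ᵥ u = 1 := by
    rw [dotProduct_comm, ← EuclideanSpace.inner_eq_star_dotProduct, inner_self_eq_norm_sq_to_K, hv]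
    norm_num
  have hσ_nonneg (j : K) : 0 ≤ (lam j : ℂ) • σ j :=
    ((hσpsd j).smul (Complex.zero_le_real.mpr (hlam j).le)).nonneg
  have hle : (lam k : ℂ) • σ k ≤ ρ :=
    hdecomp ▸ Finset.single_le_sum (fun j _ => hσ_nonneg j) (Finset.mem_univ k)
  have hker (x : n → ℂ) (hx : vecMulVec u (star u) *ᵥ x = 0) : σ k *ᵥ x = 0 := by
    have := mulVec_eq_zero_of_le_of_mulVec_eq_zero (hσ_nonneg k) hle (hρu ▸ hx)
    rwa [smul_mulVec, smul_eq_zero, or_iff_right (by exact_mod_cast (hlam k).ne')] at this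
  have hσ := (hσpsd k).isHermitian.eq_smul_vecMulVec_of_mul_eq_self
    (mul_eq_self_of_isIdempotentElem (isIdempotentElem_vecMulVec_star hu) hker)
  have hc : star u ⬝ᵥ σ k *ᵥ u = 1 := by
    simpa [hσtr k, dotProduct_comm u, hu] using (congrArg trace hσ).symm
  rw [hσ, hc, one_smul, hρu]
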